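/- Let M ≥ 3 and A ⊂ {0,...,M-1} with |A| ≥ 2 (so δ = log|A|/log M > 0). Then for every k ≥ 2, r_k = ‖1_{C_k} F_N 1_{C_k}‖ < N^{δ−1/2}, where N = M^k. -/

import Mathlib

open scoped Matrix

/-- The unitary discrete Fourier transform matrix
`(F_N)_{jℓ} = N^{-1/2} exp(-2πi jℓ/N)`. -/
noncomputable def dftMat (N : ℕ) : Matrix (Fin N) (Fin N) ℂ :=
  Matrix.of fun j ℓ => ((N : ℂ) ^ (-(1/2 : ℂ))) *
    Complex.exp (-2 * Real.pi * Complex.I * ((j : ℕ) : ℂ) * ((ℓ : ℕ) : ℂ) / (N : ℂ))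

open scoped Classical in
/-- The diagonal matrix of the coordinate projection onto indices in `S`. -/
noncomputable def projMat {N : ℕ} (S : Set ℕ) : Matrix (Fin N) (Fin N) ℂ :=
  Matrix.of fun j ℓ => if j = ℓ ∧ (j : ℕ) ∈ S then 1 else 0

/-- The discrete Cantor set: numbers all of whose base-`M` digits in positions `< k`
lie in the alphabet `A`. Restricted to `{0,…,M^k-1}` this is
`C_k = {a₀ + a₁M + ⋯ + a_{k-1}M^{k-1} : a_j ∈ A}`. -/
def cantorDigits (M k : ℕ) (A : Finset ℕ) : Set ℕ :=
  {n | ∀ i < k, (n / M ^ i) % M ∈ A}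

/-- The operator `1_{C_k} F_N 1_{C_k}` on `ℂ^N`, `N = M^k`, with the Euclidean norm. -/
noncomputable def cantorOp (M k : ℕ) (A : Finset ℕ) :
    EuclideanSpace ℂ (Fin (M ^ k)) →L[ℂ] EuclideanSpace ℂ (Fin (M ^ k)) :=
  LinearMap.toContinuousLinearMap
    (Matrix.toEuclideanLin
      (projMat (cantorDigits M k A) * dftMat (M ^ k) * projMat (cantorDigits M k A)))

/-- `r_k = ‖1_{C_k} F_N 1_{C_k}‖`, the operator norm on `ℂ^N`, `N = M^k`. -/
noncomputable def rk (M : ℕ) (A : Finset ℕ) (k : ℕ) : ℝ := ‖cantorOp M k A‖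


/-!
Write `B = 1_C F_N 1_C` and `G = Bᴴ B`, so that `‖B‖² = ‖G‖` is at most the Hilbert–Schmidt
norm of `G`. For `j, ℓ ∈ C` the entry `G j ℓ` is `N⁻¹ ∑_{m ∈ C} ω ^ (m (ℓ - j))` with
`ω = exp (-2πi/N)` a primitive `N`-th root of unity, so `‖G j ℓ‖ ≤ |C| / N`, and the inequality is
strict as soon as two of the phases differ, i.e. `N ∤ (m - m') (ℓ - j)` for some `m, m' ∈ C`.
Then `‖B‖ < |C| / √N ≤ |A| ^ k / √N = N ^ (δ - 1/2)`. For `k ≥ 2` such a pair exists: with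
`a < b` in `A` and `n ∈ C_{k-1}`, the points `a + M n, b + M n ∈ C_k` have
`0 < (b - a)² < M² ≤ N`.
-/

open Finset Complex
open scoped Matrix.Norms.L2Operator

namespace Matrix

variable {m n 𝕜 : Type*} [Fintype m] [Fintype n] [DecidableEq n] [RCLike 𝕜]

theorem l2_opNorm_le_sqrt_sum_norm_sq (A : Matrix m n 𝕜) :
    ‖A‖ ≤ √(∑ i, ∑ j, ‖A i j‖ ^ 2) := by
  rw [l2_opNorm_def]
  refine ContinuousLinearMap.opNorm_le_bound _ (by positivity) fun x => ?_
  rw [← Real.sqrt_sq (norm_nonneg x), ← Real.sqrt_mul (by positivity), EuclideanSpace.norm_eq]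
  refine Real.sqrt_le_sqrt ?_
  rw [EuclideanSpace.norm_eq, Real.sq_sqrt (by positivity), sum_mul]
  refine sum_le_sum fun i _ => ?_
  calc ‖(A *ᵥ x) i‖ ^ 2 ≤ (∑ j, ‖A i j‖ * ‖x j‖) ^ 2 := by
        gcongr
        exact (norm_sum_le _ _).trans_eq (by simp_rw [norm_mul])
    _ ≤ _ := sum_mul_sq_le_sq_mul_sq _ _ _

end Matrix

theorem norm_sum_lt_card {ι V : Type*} [NormedAddCommGroup V] [NormedSpace ℝ V]
    [StrictConvexSpace ℝ V] {s : Finset ι} {z : ι → V} (hz : ∀ i ∈ s, ‖z i‖ ≤ 1) {i j : ι}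
    (hi : i ∈ s) (hj : j ∈ s) (hij : z i ≠ z j) : ‖∑ k ∈ s, z k‖ < #s := by
  have hs : (0 : ℝ) < #s := by exact_mod_cast card_pos.2 ⟨i, hi⟩
  have h := norm_sum_lt_of_strictConvexSpace (w := fun _ => (#s : ℝ)⁻¹)
    (fun _ _ => by positivity) (by simp [hs.ne']) hi hj hij (by positivity) (by positivity) hz
  rwa [← smul_sum, norm_smul, norm_inv, Real.norm_natCast, inv_mul_lt_iff₀ hs, mul_one] at h

theorem conj_pow_mul_pow_of_norm_eq_one {z : ℂ} (hz : ‖z‖ = 1) (a b : ℕ) :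
    starRingEnd ℂ (z ^ a) * z ^ b = z ^ ((b : ℤ) - a) := by
  have hz0 : z ≠ 0 := norm_ne_zero_iff.mp (by rw [hz]; exact one_ne_zero)
  rw [map_pow, ← inv_eq_conj hz, inv_pow, zpow_sub₀ hz0, zpow_natCast, zpow_natCast,
    inv_mul_eq_div]

theorem Real.rpow_log_div_log_sub_half {b x : ℝ} (hb : 0 < b) (hb1 : b ≠ 1) (hx : 0 < x) (k : ℕ) :
    (b ^ k) ^ (Real.log x / Real.log b - 1 / 2) = x ^ k / √(b ^ k) := by
  rw [Real.rpow_sub (by positivity), ← Real.sqrt_eq_rpow, ← Real.rpow_natCast_mul hb.le,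
    mul_comm, Real.rpow_mul_natCast hb.le, Real.log_div_log, Real.rpow_logb hb hb1 hx]

theorem Nat.add_mul_lt_pow_succ {M a n k : ℕ} (ha : a < M) (hn : n < M ^ k) :
    a + M * n < M ^ (k + 1) :=
  calc a + M * n < M * (n + 1) := by linarith
    _ ≤ M * M ^ k := Nat.mul_le_mul_left _ hn
    _ = M ^ (k + 1) := by ring

theorem Nat.mod_pow_eq_of_digits_eq {M m n : ℕ} :
    ∀ {k : ℕ}, (∀ i < k, m / M ^ i % M = n / M ^ i % M) → m % M ^ k = n % M ^ k
  | 0, _ => by simp [Nat.mod_one]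
  | k + 1, h => by
    rw [Nat.mod_pow_succ, Nat.mod_pow_succ, Nat.mod_pow_eq_of_digits_eq fun i hi => h i (by omega),
      h k (by omega)]

section Fourier

variable {N : ℕ}

theorem isPrimitiveRoot_exp_neg (hN : N ≠ 0) :
    IsPrimitiveRoot (exp (-2 * Real.pi * I / N)) N := by
  have h := (isPrimitiveRoot_exp N hN).inv
  rwa [← Complex.exp_neg, ← neg_div, ← neg_mul, ← neg_mul] at h

theorem dftMat_apply (j ℓ : Fin N) :
    dftMat N j ℓ = (N : ℂ) ^ (-(1 / 2 : ℂ)) * exp (-2 * Real.pi * I / N) ^ ((j : ℕ) * ℓ) := by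
  rw [dftMat, Matrix.of_apply, ← Complex.exp_nat_mul]
  congr 2
  push_cast
  ring

theorem conj_natCast_cpow_neg_half_mul_self :
    starRingEnd ℂ ((N : ℂ) ^ (-(1 / 2 : ℂ))) * (N : ℂ) ^ (-(1 / 2 : ℂ)) = (N : ℂ)⁻¹ := by
  rcases N.eq_zero_or_pos with rfl | hN
  · simp
  rw [conj_mul', norm_natCast_cpow_of_pos hN, ← ofReal_pow,
    ← Real.rpow_mul_natCast (by positivity)]
  norm_num [Real.rpow_neg_one]

open scoped Classical in
theorem projMat_eq_diagonal (S : Set ℕ) :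
    projMat (N := N) S = Matrix.diagonal fun j : Fin N => if (j : ℕ) ∈ S then (1 : ℂ) else 0 := by
  ext j ℓ
  rcases eq_or_ne j ℓ with rfl | h
  · simp [projMat]
  · simp [projMat, h]

noncomputable def dftCompression (N : ℕ) (S : Set ℕ) : Matrix (Fin N) (Fin N) ℂ :=
  projMat S * dftMat N * projMat S

open scoped Classical in
theorem dftCompression_apply (S : Set ℕ) (j ℓ : Fin N) :
    dftCompression N S j ℓ =
      if (j : ℕ) ∈ S ∧ (ℓ : ℕ) ∈ S then
        (N : ℂ) ^ (-(1 / 2 : ℂ)) * exp (-2 * Real.pi * I / N) ^ ((j : ℕ) * ℓ) else 0 := by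
  rw [dftCompression, projMat_eq_diagonal, Matrix.mul_diagonal, Matrix.diagonal_mul, dftMat_apply]
  split_ifs <;> simp_all

open scoped Classical in
theorem conjTranspose_dftCompression_mul_self_apply [NeZero N] (S : Set ℕ) (j ℓ : Fin N) :
    ((dftCompression N S)ᴴ * dftCompression N S) j ℓ =
      if (j : ℕ) ∈ S ∧ (ℓ : ℕ) ∈ S then
        (N : ℂ)⁻¹ * ∑ m ∈ univ.filter (fun m : Fin N => (m : ℕ) ∈ S),
          exp (-2 * Real.pi * I / N) ^ ((m : ℤ) * ((ℓ : ℤ) - j))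
      else 0 := by
  have hω := (isPrimitiveRoot_exp_neg (NeZero.ne N)).norm'_eq_one (NeZero.ne N)
  simp only [Matrix.mul_apply, Matrix.conjTranspose_apply, dftCompression_apply]
  by_cases h : (j : ℕ) ∈ S ∧ (ℓ : ℕ) ∈ S
  · rw [if_pos h, mul_sum, sum_filter]
    refine sum_congr rfl fun m _ => ?_
    by_cases hm : (m : ℕ) ∈ S
    · simp only [hm, h, and_self, if_true, star_mul', RCLike.star_def]
      rw [mul_mul_mul_comm, conj_natCast_cpow_neg_half_mul_self, conj_pow_mul_pow_of_norm_eq_one hω]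
      congr 2
      push_cast
      ring
    · simp [hm]
  · rw [if_neg h]
    refine sum_eq_zero fun m _ => ?_
    by_cases hj : (j : ℕ) ∈ S <;> simp_all

open scoped Classical in
theorem norm_conjTranspose_dftCompression_mul_self_apply_le [NeZero N] (S : Set ℕ) (j ℓ : Fin N) :
    ‖((dftCompression N S)ᴴ * dftCompression N S) j ℓ‖ ≤
      if (j : ℕ) ∈ S ∧ (ℓ : ℕ) ∈ S then (#(univ.filter fun m : Fin N => (m : ℕ) ∈ S) : ℝ) / N
      else 0 := by
  have hω := (isPrimitiveRoot_exp_neg (NeZero.ne N)).norm'_eq_one (NeZero.ne N)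
  rw [conjTranspose_dftCompression_mul_self_apply]
  split_ifs
  · rw [norm_mul, norm_inv, norm_natCast, inv_mul_eq_div]
    gcongr
    refine (norm_sum_le _ _).trans_eq ?_
    simp only [norm_zpow, hω, one_zpow, sum_const, nsmul_eq_mul, mul_one]
  · rw [norm_zero]

open scoped Classical in
theorem norm_conjTranspose_dftCompression_mul_self_apply_lt [NeZero N] {S : Set ℕ}
    {j ℓ m m' : Fin N} (hj : (j : ℕ) ∈ S) (hℓ : (ℓ : ℕ) ∈ S) (hm : (m : ℕ) ∈ S) (hm' : (m' : ℕ) ∈ S)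
    (hdvd : ¬ (N : ℤ) ∣ ((m : ℤ) - m') * ((ℓ : ℤ) - j)) :
    ‖((dftCompression N S)ᴴ * dftCompression N S) j ℓ‖ <
      (#(univ.filter fun m : Fin N => (m : ℕ) ∈ S) : ℝ) / N := by
  have hprim := isPrimitiveRoot_exp_neg (NeZero.ne N)
  have hω := hprim.norm'_eq_one (NeZero.ne N)
  have hN : (0 : ℝ) < N := by exact_mod_cast Nat.pos_of_ne_zero (NeZero.ne N)
  rw [conjTranspose_dftCompression_mul_self_apply, if_pos ⟨hj, hℓ⟩, norm_mul, norm_inv,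
    norm_natCast, inv_mul_eq_div]
  gcongr
  refine norm_sum_lt_card (fun _ _ => by rw [norm_zpow, hω, one_zpow])
    (mem_filter.2 ⟨mem_univ _, hm⟩) (mem_filter.2 ⟨mem_univ _, hm'⟩) fun heq => hdvd ?_
  rw [← hprim.zpow_eq_one_iff_dvd, sub_mul, zpow_sub₀ (hprim.ne_zero (NeZero.ne N)), heq,
    div_self (zpow_ne_zero _ (hprim.ne_zero (NeZero.ne N)))]

open scoped Classical in
theorem norm_dftCompression_lt [NeZero N] {S : Set ℕ} {j j' ℓ ℓ' : Fin N}
    (hj : (j : ℕ) ∈ S) (hj' : (j' : ℕ) ∈ S) (hℓ : (ℓ : ℕ) ∈ S) (hℓ' : (ℓ' : ℕ) ∈ S)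
    (hdvd : ¬ (N : ℤ) ∣ ((j : ℤ) - j') * ((ℓ : ℤ) - ℓ')) :
    ‖dftCompression N S‖ < (#(univ.filter fun m : Fin N => (m : ℕ) ∈ S) : ℝ) / √N := by
  set B := dftCompression N S
  set c : ℝ := ((#(univ.filter fun m : Fin N => (m : ℕ) ∈ S) : ℕ) : ℝ)
  have hN : (0 : ℝ) < N := by exact_mod_cast Nat.pos_of_ne_zero (NeZero.ne N)
  have hle := norm_conjTranspose_dftCompression_mul_self_apply_le (N := N) S
  have hsum : ∑ a, ∑ b, ‖(Bᴴ * B) a b‖ ^ 2 <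
      ∑ a : Fin N, ∑ b : Fin N, (if (a : ℕ) ∈ S ∧ (b : ℕ) ∈ S then c / N else 0) ^ 2 := by
    refine sum_lt_sum (fun a _ => sum_le_sum fun b _ => by gcongr; exact hle a b)
      ⟨ℓ', mem_univ _, sum_lt_sum (fun b _ => by gcongr; exact hle ℓ' b) ⟨ℓ, mem_univ _, ?_⟩⟩
    rw [if_pos ⟨hℓ', hℓ⟩]
    gcongr
    exact norm_conjTranspose_dftCompression_mul_self_apply_lt hℓ' hℓ hj hj' hdvd
  have hgram : ‖Bᴴ * B‖ < c ^ 2 / N := by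
    calc ‖Bᴴ * B‖ ≤ √(∑ a, ∑ b, ‖(Bᴴ * B) a b‖ ^ 2) := Matrix.l2_opNorm_le_sqrt_sum_norm_sq _
      _ < √(∑ a : Fin N, ∑ b : Fin N,
            (if (a : ℕ) ∈ S ∧ (b : ℕ) ∈ S then c / N else 0) ^ 2) :=
          Real.sqrt_lt_sqrt (by positivity) hsum
      _ = c ^ 2 / N := by
          have hsplit : ∀ a b : Fin N,
              (if (a : ℕ) ∈ S ∧ (b : ℕ) ∈ S then c / N else 0) ^ 2 =
                (if (a : ℕ) ∈ S then c / N else 0) * (if (b : ℕ) ∈ S then c / N else 0) := by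
            intro a b
            by_cases ha : (a : ℕ) ∈ S <;> by_cases hb : (b : ℕ) ∈ S <;> simp [ha, hb, sq]
          simp only [hsplit, ← sum_mul_sum, ← sum_filter, sum_const, nsmul_eq_mul]
          rw [← sq, Real.sqrt_sq (by positivity)]
          ring
  rw [Matrix.l2_opNorm_conjTranspose_mul_self] at hgram
  refine lt_of_pow_lt_pow_left₀ 2 (by positivity) ?_
  rwa [div_pow, Real.sq_sqrt hN.le, sq]

end Fourier

section CantorDigits

variable {M k : ℕ} {A : Finset ℕ}

theorem add_mul_mem_cantorDigits_succ {a n : ℕ} (ha : a ∈ A) (haM : a < M)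
    (hn : n ∈ cantorDigits M k A) : a + M * n ∈ cantorDigits M (k + 1) A := by
  intro i hi
  cases i with
  | zero => simpa [Nat.add_mul_mod_self_left, Nat.mod_eq_of_lt haM] using ha
  | succ i =>
    rw [pow_succ', ← Nat.div_div_eq_div_mul, Nat.add_mul_div_left _ _ (by omega),
      Nat.div_eq_of_lt haM, zero_add]
    exact hn i (by omega)

theorem exists_mem_cantorDigits_lt {a : ℕ} (ha : a ∈ A) (haM : a < M) :
    ∃ n < M ^ k, n ∈ cantorDigits M k A := by
  induction k with
  | zero => exact ⟨0, by simp, fun i hi => absurd hi (Nat.not_lt_zero i)⟩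
  | succ k ih =>
    obtain ⟨n, hn, hnC⟩ := ih
    exact ⟨a + M * n, Nat.add_mul_lt_pow_succ haM hn, add_mul_mem_cantorDigits_succ ha haM hnC⟩

open scoped Classical in
theorem card_cantorDigits_le :
    #(univ.filter fun m : Fin (M ^ k) => (m : ℕ) ∈ cantorDigits M k A) ≤ #A ^ k := by
  calc #(univ.filter fun m : Fin (M ^ k) => (m : ℕ) ∈ cantorDigits M k A)
      ≤ #(Fintype.piFinset fun _ : Fin k => A) := by
        refine card_le_card_of_injOn (fun m i => (m : ℕ) / M ^ (i : ℕ) % M) ?_ ?_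
        · intro m hm
          simp only [coe_filter, mem_univ, true_and, Set.mem_ofPred_eq] at hm
          simpa [Fintype.mem_piFinset] using fun i : Fin k => hm i i.isLt
        · intro m _ m' _ h
          have h := Nat.mod_pow_eq_of_digits_eq (k := k) fun i hi => congrFun h ⟨i, hi⟩
          rwa [Nat.mod_eq_of_lt m.isLt, Nat.mod_eq_of_lt m'.isLt, ← Fin.ext_iff] at h
    _ = #A ^ k := by simp [Fintype.card_piFinset]

theorem exists_mem_cantorDigits_not_dvd (hk : 2 ≤ k) (hA : 2 ≤ #A) (hAM : ∀ a ∈ A, a < M) :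
    ∃ j j' : Fin (M ^ k), (j : ℕ) ∈ cantorDigits M k A ∧ (j' : ℕ) ∈ cantorDigits M k A ∧
      ¬ ((M ^ k : ℕ) : ℤ) ∣ ((j : ℤ) - j') * ((j : ℤ) - j') := by
  obtain ⟨a, ha, b, hb, hab⟩ : ∃ a ∈ A, ∃ b ∈ A, a < b := by
    obtain ⟨a, ha, b, hb, hne⟩ := one_lt_card.1 hA
    rcases hne.lt_or_gt with h | h
    exacts [⟨a, ha, b, hb, h⟩, ⟨b, hb, a, ha, h⟩]
  obtain ⟨k, rfl⟩ : ∃ k', k = k' + 1 := ⟨k - 1, by omega⟩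
  obtain ⟨n, hn, hnC⟩ := exists_mem_cantorDigits_lt (k := k) ha (hAM a ha)
  refine ⟨⟨a + M * n, Nat.add_mul_lt_pow_succ (hAM a ha) hn⟩,
    ⟨b + M * n, Nat.add_mul_lt_pow_succ (hAM b hb) hn⟩,
    add_mul_mem_cantorDigits_succ ha (hAM a ha) hnC,
    add_mul_mem_cantorDigits_succ hb (hAM b hb) hnC, fun h => ?_⟩
  push_cast at h
  rw [show ((a : ℤ) + M * n - (b + M * n)) * (a + M * n - (b + M * n)) = ((b : ℤ) - a) ^ 2 by
    ring] at h
  have hpos : 0 < (b : ℤ) - a := sub_pos.2 (by exact_mod_cast hab)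
  have hlt : ((b : ℤ) - a) ^ 2 < (M : ℤ) ^ (k + 1) :=
    calc ((b : ℤ) - a) ^ 2 < (M : ℤ) ^ 2 := by
          gcongr
          linarith [(by exact_mod_cast hAM b hb : (b : ℤ) < M)]
      _ ≤ (M : ℤ) ^ (k + 1) := pow_le_pow_right₀ (by have := hAM b hb; omega) hk
  exact (pow_pos hpos 2).ne' (Int.eq_zero_of_abs_lt_dvd h (by rwa [abs_of_pos (pow_pos hpos 2)]))

end CantorDigits

theorem stmt10_general (M : ℕ) (A : Finset ℕ) (hA2 : 2 ≤ A.card)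
    (hAM : ∀ a ∈ A, a < M) (k : ℕ) (hk : 2 ≤ k) :
    rk M A k < (((M : ℝ) ^ k) ^ (Real.log A.card / Real.log M - 1/2 : ℝ)) := by
  classical
  have hM : 2 ≤ M := hA2.trans ((card_le_card fun a ha => mem_range.2 (hAM a ha)).trans_eq
    (card_range M))
  have : NeZero (M ^ k) := ⟨by positivity⟩
  obtain ⟨j, j', hj, hj', hdvd⟩ := exists_mem_cantorDigits_not_dvd hk hA2 hAM
  calc rk M A k = ‖dftCompression (M ^ k) (cantorDigits M k A)‖ := rfl
    _ < #(univ.filter fun m : Fin (M ^ k) => (m : ℕ) ∈ cantorDigits M k A) / √((M ^ k : ℕ) : ℝ) :=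
        norm_dftCompression_lt hj hj' hj hj' hdvd
    _ ≤ (#A : ℝ) ^ k / √((M : ℝ) ^ k) := by
        push_cast
        gcongr
        exact_mod_cast card_cantorDigits_le
    _ = ((M : ℝ) ^ k) ^ (Real.log #A / Real.log M - 1 / 2) :=
        (Real.rpow_log_div_log_sub_half (by positivity) (by norm_cast; omega)
          (by norm_cast; omega) k).symm

/-- If `|A| ≥ 2` (so `δ > 0`), then for every `k ≥ 2`,
`r_k < N^{δ−1/2}` where `N = M^k` and `δ = log|A|/log M`. -/
theorem stmt10 (M : ℕ) (hM : 3 ≤ M) (A : Finset ℕ) (hA2 : 2 ≤ A.card)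
    (hAM : ∀ a ∈ A, a < M) (k : ℕ) (hk : 2 ≤ k) :
    rk M A k < (((M : ℝ) ^ k) ^ (Real.log A.card / Real.log M - 1/2 : ℝ)) :=
  stmt10_general M A hA2 hAM k hk
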